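/- Let (γ,ε,ξ) ∈ Z²(l, a, ω_a) be a quadratic cocycle such that the center z of d := d_{γ,ε,ξ}(l,a) is contained in l* ⊕ a. Then (z ∩ a) ∩ (z ∩ a)^{⊥_{ω_a}} = z ∩ a ∩ z^{⊥_ω}, where ⊥_ω denotes orthogonality in d with respect to ω and ⊥_{ω_a} orthogonality in a with respect to ω_a. -/
import Mathlib


namespace Stmt9

variable {l a : Type*} [AddCommGroup l] [Module ℝ l] [LieRing a] [LieAlgebra ℝ a]

/-- The underlying vector space `l* ⊕ a ⊕ l` of the standard model. -/
abbrev Dm (l a : Type*) [AddCommGroup l] [Module ℝ l] [AddCommGroup a] [Module ℝ a] :=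
  (Module.Dual ℝ l) × a × l

/-- `β(A₁, A₂) = L ↦ −ω_a(ξ(L)A₁, A₂) − ω_a(A₁, ξ(L)A₂)` as an element of `l*`. -/
def betaF (ωa : a →ₗ[ℝ] a →ₗ[ℝ] ℝ) (ξ : l →ₗ[ℝ] (a →ₗ[ℝ] a)) (A₁ A₂ : a) :
    Module.Dual ℝ l :=
  - ((ωa.flip A₂) ∘ₗ (ξ.flip A₁)) - ((ωa A₁) ∘ₗ (ξ.flip A₂))

/-- The bracket of the standard model `d_{γ,ε,ξ}(l,a)` on `l* ⊕ a ⊕ l`. -/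
def br (ωa : a →ₗ[ℝ] a →ₗ[ℝ] ℝ) (γ : l →ₗ[ℝ] (a →ₗ[ℝ] Module.Dual ℝ l))
    (ε : l →ₗ[ℝ] (l →ₗ[ℝ] Module.Dual ℝ l)) (ξ : l →ₗ[ℝ] (a →ₗ[ℝ] a))
    (αf : l → l → a) : Dm l a → Dm l a → Dm l a :=
  fun x y =>
    (betaF ωa ξ x.2.1 y.2.1 + γ x.2.2 y.2.1 - γ y.2.2 x.2.1 + ε x.2.2 y.2.2,
     ⁅x.2.1, y.2.1⁆ + ξ x.2.2 y.2.1 - ξ y.2.2 x.2.1 + αf x.2.2 y.2.2,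
     0)

/-- The symplectic form of the standard model. -/
def Om (ωa : a →ₗ[ℝ] a →ₗ[ℝ] ℝ) : Dm l a → Dm l a → ℝ :=
  fun x y => x.1 y.2.2 + ωa x.2.1 y.2.1 - y.1 x.2.2

/-- The five conditions defining the set `Z²(l, a, ω_a)` of quadratic cocycles
(with `αf` the `ω_a`-dual datum `α` of `γ`). -/
def IsQuadCocycle (ωa : a →ₗ[ℝ] a →ₗ[ℝ] ℝ) (γ : l →ₗ[ℝ] (a →ₗ[ℝ] Module.Dual ℝ l))
    (ε : l →ₗ[ℝ] (l →ₗ[ℝ] Module.Dual ℝ l)) (ξ : l →ₗ[ℝ] (a →ₗ[ℝ] a))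
    (αf : l → l → a) : Prop :=
  -- (1) (ξ, α) is a factor system :
  ((∀ (L : l) (X Y : a), ξ L ⁅X, Y⁆ = ⁅ξ L X, Y⁆ + ⁅X, ξ L Y⁆) ∧
    (∀ (L₁ L₂ : l) (A : a), ξ L₁ (ξ L₂ A) - ξ L₂ (ξ L₁ A) = ⁅αf L₁ L₂, A⁆) ∧
    (∀ L₁ L₂ L₃ : l, ξ L₁ (αf L₂ L₃) - ξ L₂ (αf L₁ L₃) + ξ L₃ (αf L₁ L₂) = 0)) ∧
  -- (2) :
  (∀ (L : l) (A₁ A₂ : a),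
      betaF ωa ξ (ξ L A₁) A₂ + betaF ωa ξ A₁ (ξ L A₂) = γ L ⁅A₁, A₂⁆) ∧
  -- (3) d_{ξ̂}γ + β₀ ∘ α = 0 :
  (∀ (L₁ L₂ : l) (A : a),
      γ L₂ (ξ L₁ A) - γ L₁ (ξ L₂ A) + betaF ωa ξ (αf L₁ L₂) A = 0) ∧
  -- (4) ev(γ ∧ α) = 0 :
  (∀ L₁ L₂ L₃ : l,
      γ L₁ (αf L₂ L₃) - γ L₂ (αf L₁ L₃) + γ L₃ (αf L₁ L₂) = 0) ∧
  -- (5) :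
  (∀ L₁ L₂ L₃ : l, ε L₁ L₂ L₃ + ε L₂ L₃ L₁ + ε L₃ L₁ L₂ = 0)

/-- The center of the standard model, as a predicate. -/
def InCenter (ωa : a →ₗ[ℝ] a →ₗ[ℝ] ℝ) (γ : l →ₗ[ℝ] (a →ₗ[ℝ] Module.Dual ℝ l))
    (ε : l →ₗ[ℝ] (l →ₗ[ℝ] Module.Dual ℝ l)) (ξ : l →ₗ[ℝ] (a →ₗ[ℝ] a))
    (αf : l → l → a) (x : Dm l a) : Prop :=
  ∀ y : Dm l a, br ωa γ ε ξ αf x y = 0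

/-- if the center `z` of the standard model is contained in `l* ⊕ a`,
then `(z ∩ a) ∩ (z ∩ a)^{⊥_{ω_a}} = z ∩ a ∩ z^{⊥_ω}`. -/
theorem center_cap_a_orth_eq
    [FiniteDimensional ℝ l] [FiniteDimensional ℝ a]
    (ωa : a →ₗ[ℝ] a →ₗ[ℝ] ℝ)
    (hskew : ∀ X Y : a, ωa X Y = - ωa Y X)
    (hnd : ∀ X : a, (∀ Y : a, ωa X Y = 0) → X = 0)
    (hclosed : ∀ X Y Z : a, ωa ⁅X, Y⁆ Z - ωa ⁅X, Z⁆ Y + ωa ⁅Y, Z⁆ X = 0)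
    (γ : l →ₗ[ℝ] (a →ₗ[ℝ] Module.Dual ℝ l))
    (ε : l →ₗ[ℝ] (l →ₗ[ℝ] Module.Dual ℝ l)) (hε : ∀ L : l, ε L L = 0)
    (ξ : l →ₗ[ℝ] (a →ₗ[ℝ] a))
    (αf : l → l → a)
    (hα : ∀ (L₁ L₂ : l) (A : a), γ L₁ A L₂ - γ L₂ A L₁ = ωa (αf L₁ L₂) A)
    (hcoc : IsQuadCocycle ωa γ ε ξ αf)
    (hz : ∀ x : Dm l a, InCenter ωa γ ε ξ αf x → x.2.2 = 0) :
    ∀ A : a,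
      (InCenter ωa γ ε ξ αf ((0 : Module.Dual ℝ l), A, (0 : l)) ∧
        (∀ B : a, InCenter ωa γ ε ξ αf ((0 : Module.Dual ℝ l), B, (0 : l)) → ωa A B = 0))
      ↔ (InCenter ωa γ ε ξ αf ((0 : Module.Dual ℝ l), A, (0 : l)) ∧
        (∀ y : Dm l a, InCenter ωa γ ε ξ αf y →
          Om ωa ((0 : Module.Dual ℝ l), A, (0 : l)) y = 0)) := by
  intro A
  constructor
  · rintro ⟨hA, h⟩
    refine ⟨hA, fun y hy => ?_⟩
    have hy2 := hz y hy
    have hcen : InCenter ωa γ ε ξ αf ((0 : Module.Dual ℝ l), y.2.1, (0 : l)) := by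
      intro w
      have hw := hy w
      simp only [br, hy2] at hw ⊢
      simpa using hw
    have h0 := h y.2.1 hcen
    simp [Om, hy2, h0]
  · rintro ⟨hA, h⟩
    refine ⟨hA, fun B hB => ?_⟩
    have := h ((0 : Module.Dual ℝ l), B, (0 : l)) hB
    simpa [Om] using this

end Stmt9
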